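/- Let f : ℂ² × ℂ² → ℂ be holomorphic (complex-differentiable) and fix ρ = (ρ₀,ρ₁) ∈ ℂ². Define g on ℂ^{2×2} × ℂ² by g(x,π) = f( (i Σ_{B'} x^{0B'}ρ_{B'} + π⁰, i Σ_{B'} x^{1B'}ρ_{B'} + π¹), ρ ). Then g satisfies the zero rest-mass equation: for each A' ∈ {0,1}, Σ_{A,B∈{0,1}} ε^{AB} ∂²g/(∂π^B ∂x^{AA'}) = 0 identically. (Paper: the differentiation step in the proof of Lemma 6.1, showing that the integrand of the contour integral (6.4) — and hence the twistor contour integral itself — satisfies the zero rest-mass field equations ∂_π^A ∂_a φ(f) = 0.) -/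

import Mathlib

/-!
The differentiation step in the proof of Lemma 6.1: for holomorphic `f` and
fixed `ρ`, the function `g(x,π) = f((i Σ x^{AB'}ρ_{B'} + π^A)_A, ρ)` (the
integrand of the twistor contour integral (6.4)) satisfies the zero rest-mass
equation `Σ_{A,B} ε^{AB} ∂²g/(∂π^B ∂x^{AA'}) = 0` for each `A'`.
-/

/-- Fields on complexified space-time with one spinor argument. -/
abbrev ZrmField : Type :=
  (Fin 2 → Fin 2 → ℂ) → (Fin 2 → ℂ) → ℂ

/-- Complex partial derivative with respect to `x^{AA'}`. -/
noncomputable def dX (A A' : Fin 2) (g : ZrmField) : ZrmField :=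
  fun x π =>
    deriv (fun s : ℂ => g (Function.update x A (Function.update (x A) A' s)) π) (x A A')

/-- Complex partial derivative with respect to `π^B`. -/
noncomputable def dPi (B : Fin 2) (g : ZrmField) : ZrmField :=
  fun x π => deriv (fun s : ℂ => g x (Function.update π B s)) (π B)

/-- The antisymmetric ε-symbol on `{0,1}`: `ε^{01} = 1 = −ε^{10}`. -/
def eps (A B : Fin 2) : ℂ :=
  if A = 0 ∧ B = 1 then 1 else if A = 1 ∧ B = 0 then -1 else 0

/-- The integrand of the twistor contour integral:
`g(x,π) = f((i Σ_{B'} x^{AB'}ρ_{B'} + π^A)_A, ρ)`. -/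
noncomputable def gField (f : (Fin 2 → ℂ) × (Fin 2 → ℂ) → ℂ) (ρ : Fin 2 → ℂ) : ZrmField :=
  fun x π =>
    f ((fun A : Fin 2 => Complex.I * (∑ B' : Fin 2, x A B' * ρ B') + π A), ρ)

/-!
Moving `x^{AA'}` along the incidence relation moves the point `i x ρ + π` in its `A`-th
coordinate with speed `i ρ_{A'}`, so `∂g/∂x^{AA'} = i ρ_{A'} ∂g/∂π^A`. The ε-contraction thus
becomes `i ρ_{A'} (∂_{π¹}∂_{π⁰} - ∂_{π⁰}∂_{π¹}) g`, which vanishes because mixed partial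
derivatives of a holomorphic function of two variables commute. For the latter, write
`∂_s F(a, t)` by Cauchy's formula in `s` and differentiate under the integral sign in `t`
(the integrand is dominated thanks to Cauchy's estimate): this shows both that
`s ↦ ∂_t F(s, b)` is holomorphic and that its Cauchy integral around `a` is `∂_t ∂_s F(a, b)`.
-/

open Set Metric Function Complex

section

open Real

variable {E : Type*} [NormedAddCommGroup E] [NormedSpace ℂ E] [CompleteSpace E]

theorem intervalIntegral.hasDerivAt_integral_of_continuous_of_differentiable
    {H : ℝ → ℂ → E} (hc : Continuous (uncurry H)) (hd : ∀ θ, Differentiable ℂ (H θ))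
    (a b : ℝ) (t₀ : ℂ) :
    HasDerivAt (fun t => ∫ θ in a..b, H θ t) (∫ θ in a..b, deriv (H θ) t₀) t₀ := by
  obtain ⟨M, hM⟩ :=
    (isCompact_uIcc.prod (isCompact_closedBall t₀ 2)).exists_bound_of_continuousOn hc.continuousOn
  have hbound : ∀ θ ∈ uIcc a b, ∀ t ∈ ball t₀ 1, ‖deriv (H θ) t‖ ≤ M := by
    intro θ hθ t ht
    simpa using norm_deriv_le_of_forall_mem_sphere_norm_le one_pos (hd θ).diffContOnCl
      fun z hz => hM (θ, z) ⟨hθ, mem_closedBall.2 (by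
        have := dist_triangle z t t₀
        rw [mem_sphere.1 hz] at this
        linarith [mem_ball.1 ht])⟩
  refine (intervalIntegral.hasDerivAt_integral_of_dominated_loc_of_deriv_le
    (μ := MeasureTheory.volume) (F := fun t θ => H θ t) (F' := fun t θ => deriv (H θ) t)
    (bound := fun _ => M) (ball_mem_nhds t₀ one_pos) ?_ ?_ ?_ ?_ intervalIntegrable_const ?_).2
  · exact .of_forall fun t =>
      (hc.comp (continuous_id.prodMk continuous_const)).aestronglyMeasurable
  · exact (hc.comp (continuous_id.prodMk continuous_const)).intervalIntegrable _ _
  · exact ((stronglyMeasurable_deriv_with_param hc).comp_measurable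
      (measurable_id.prodMk measurable_const)).aestronglyMeasurable
  · exact .of_forall fun θ hθ t ht => hbound θ (uIoc_subset_uIcc hθ) t ht
  · exact .of_forall fun θ _ t _ => (hd θ t).hasDerivAt

theorem hasDerivAt_circleIntegral_of_differentiable {F : ℂ → ℂ → E} {c : ℂ} {R : ℝ}
    (hc : ContinuousOn (uncurry F) (sphere c |R| ×ˢ univ))
    (hd : ∀ z ∈ sphere c |R|, Differentiable ℂ (F z)) (t₀ : ℂ) :
    HasDerivAt (fun t => ∮ z in C(c, R), F z t) (∮ z in C(c, R), deriv (F z) t₀) t₀ := by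
  simp only [circleIntegral]
  have hcont : Continuous fun p : ℝ × ℂ => F (circleMap c R p.1) p.2 :=
    hc.comp_continuous (((continuous_circleMap c R).comp continuous_fst).prodMk continuous_snd)
      fun p => ⟨circleMap_mem_sphere' c R p.1, mem_univ _⟩
  convert intervalIntegral.hasDerivAt_integral_of_continuous_of_differentiable
    (H := fun θ t => deriv (circleMap c R) θ • F (circleMap c R θ) t) ?_
    (fun θ => (hd _ (circleMap_mem_sphere' c R θ)).const_smul _) 0 (2 * π) t₀ using 3 with θ
  · rw [deriv_fun_const_smul _ ((hd _ (circleMap_mem_sphere' c R θ)) t₀)]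
  · simp only [deriv_circleMap]
    exact ((((continuous_circleMap 0 R).mul continuous_const)).comp continuous_fst).smul hcont

theorem deriv_eq_inv_smul_circleIntegral {f : ℂ → E} (hf : Differentiable ℂ f) (c : ℂ) :
    deriv f c = (2 * π * I)⁻¹ • ∮ z in C(c, 1), (1 / (z - c) ^ 2) • f z := by
  rw [hf.differentiableOn.deriv_eq_smul_circleIntegral one_pos, inv_smul_smul₀ two_pi_I_ne_zero]

theorem hasDerivAt_deriv_fst_of_differentiable {F : ℂ × ℂ → E} (hF : Differentiable ℂ F)
    (a b : ℂ) :
    HasDerivAt (fun t => deriv (fun s => F (s, t)) a)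
      ((2 * π * I)⁻¹ • ∮ z in C(a, 1), (1 / (z - a) ^ 2) • deriv (fun t => F (z, t)) b) b := by
  have hdiff : ∀ z, Differentiable ℂ fun t => F (z, t) := fun z => by fun_prop
  have hrep : (fun t => deriv (fun s => F (s, t)) a) =
      fun t => (2 * π * I)⁻¹ • ∮ z in C(a, 1), (1 / (z - a) ^ 2) • F (z, t) := by
    funext t
    exact deriv_eq_inv_smul_circleIntegral (by fun_prop) a
  rw [hrep]
  refine HasDerivAt.const_smul _ ?_
  convert hasDerivAt_circleIntegral_of_differentiable (F := fun z t => (1 / (z - a) ^ 2) • F (z, t))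
    ?_ (fun z _ => (hdiff z).const_smul _) b using 3 with z
  · rw [deriv_fun_const_smul _ (hdiff z b)]
  · refine ContinuousOn.smul ?_ hF.continuous.continuousOn
    refine continuousOn_const.div (by fun_prop) fun p hp => pow_ne_zero 2 (sub_ne_zero.2 ?_)
    intro h
    simpa [h] using hp.1

theorem deriv_deriv_comm_of_differentiable {F : ℂ × ℂ → E} (hF : Differentiable ℂ F) (a b : ℂ) :
    deriv (fun t => deriv (fun s => F (s, t)) a) b =
      deriv (fun s => deriv (fun t => F (s, t)) b) a := by
  have hG : Differentiable ℂ fun s => deriv (fun t => F (s, t)) b := fun s =>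
    (hasDerivAt_deriv_fst_of_differentiable (F := fun p => F (p.2, p.1)) (by fun_prop) b s
      ).differentiableAt
  rw [(hasDerivAt_deriv_fst_of_differentiable hF a b).deriv, deriv_eq_inv_smul_circleIntegral hG]

end

theorem sum_eps_mul (T : Fin 2 → Fin 2 → ℂ) :
    ∑ A : Fin 2, ∑ B : Fin 2, eps A B * T A B = T 0 1 - T 1 0 := by
  simp [Fin.sum_univ_two, eps, sub_eq_add_neg]

theorem dPi_const_mul (B : Fin 2) (c : ℂ) (g : ZrmField) :
    dPi B (fun x π => c * g x π) = fun x π => c * dPi B g x π := by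
  funext x π
  exact deriv_const_mul_field c

theorem dPi_dPi_comm {g : ZrmField} (hg : ∀ x, Differentiable ℂ (g x)) (x : Fin 2 → Fin 2 → ℂ)
    (π : Fin 2 → ℂ) : dPi 1 (dPi 0 g) x π = dPi 0 (dPi 1 g) x π := by
  have h01 : ∀ u v, update (update π 0 u) 1 v = ![u, v] := fun u v => by
    funext i; fin_cases i <;> simp
  have h10 : ∀ u v, update (update π 1 v) 0 u = ![u, v] := fun u v => by
    funext i; fin_cases i <;> simp
  simp only [dPi, ne_eq, zero_ne_one, not_false_eq_true, update_of_ne, one_ne_zero, h01, h10]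
  exact deriv_deriv_comm_of_differentiable
    ((hg x).comp (ContinuousLinearEquiv.finTwoArrow ℂ ℂ).symm.differentiable) _ _

theorem gField_update_x (f : (Fin 2 → ℂ) × (Fin 2 → ℂ) → ℂ) (ρ : Fin 2 → ℂ)
    (x : Fin 2 → Fin 2 → ℂ) (π : Fin 2 → ℂ) (A A' : Fin 2) (s : ℂ) :
    gField f ρ (update x A (update (x A) A' s)) π =
      gField f ρ x (update π A (π A + I * ρ A' * (s - x A A'))) := by
  unfold gField
  congr 2
  funext C
  rcases eq_or_ne C A with rfl | hC
  · fin_cases A' <;>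
      simp only [Fin.zero_eta, Fin.mk_one, Fin.isValue, Fin.sum_univ_two, update_self, ne_eq,
        zero_ne_one, one_ne_zero, not_false_eq_true, update_of_ne] <;> ring
  · simp [update_of_ne hC]

theorem differentiable_gField {f : (Fin 2 → ℂ) × (Fin 2 → ℂ) → ℂ} (hf : Differentiable ℂ f)
    (ρ : Fin 2 → ℂ) (x : Fin 2 → Fin 2 → ℂ) : Differentiable ℂ (gField f ρ x) := by
  unfold gField
  fun_prop

theorem dX_gField {f : (Fin 2 → ℂ) × (Fin 2 → ℂ) → ℂ} (hf : Differentiable ℂ f)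
    (ρ : Fin 2 → ℂ) (A A' : Fin 2) :
    dX A A' (gField f ρ) = fun x π => I * ρ A' * dPi A (gField f ρ) x π := by
  funext x π
  have hshift : HasDerivAt (fun s => π A + I * ρ A' * (s - x A A')) (I * ρ A') (x A A') := by
    simpa using (((hasDerivAt_id _).sub_const (x A A')).const_mul (I * ρ A')).const_add (π A)
  have hπ : HasDerivAt (fun u => gField f ρ x (update π A u)) (dPi A (gField f ρ) x π)
      (π A + I * ρ A' * (x A A' - x A A')) := by
    rw [sub_self, mul_zero, add_zero]
    exact ((differentiable_gField hf ρ x _).comp _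
      (hasDerivAt_update π A _).differentiableAt).hasDerivAt
  simp only [dX, gField_update_x]
  exact (hπ.comp (x A A') hshift).deriv.trans (mul_comm _ _)

theorem zrm_gField (f : (Fin 2 → ℂ) × (Fin 2 → ℂ) → ℂ) (hf : Differentiable ℂ f)
    (ρ : Fin 2 → ℂ) :
    ∀ A' : Fin 2, ∀ x π,
      ∑ A : Fin 2, ∑ B : Fin 2, eps A B * dPi B (dX A A' (gField f ρ)) x π = 0 := by
  intro A' x π
  simp only [sum_eps_mul, dX_gField hf, dPi_const_mul,
    dPi_dPi_comm (differentiable_gField hf ρ), sub_self]
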